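/- arXiv:math/0409539 — 4 statements merged into one kernel-verified Lean document; each statement's English description precedes it below -/
import Mathlib

section
/- Let E be a topological space with ℰ its Borel σ-algebra and give Ω = E^{ℤ^d} the product topology. Let {ρ_i}_{i∈ℤ^d} satisfy λ_i(ρ_i ∣ ω) = 1 for all i and ω, together with hypotheses (H1) and (H2), and let {ρ_Λ}_{Λ∈𝒮} be the constructed family making {ρ_Λ λ_Λ}_{Λ∈𝒮} a specification. Suppose each ρ_i is sequentially continuous and for each finite V ⊆ ℤ^d and j ∉ V there exists x_j ∈ ⋂_ω b(j,V,ω) such that ∫ sup_ω [(ρ_i ρ_j^{-1})(σ_i x_j ω)] λ^i(dσ_i) < ∞ for all i ∈ V. Then the functions ρ_Λ, Λ ∈ 𝒮, are sequentially continuous. -/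
open MeasureTheory ProbabilityTheory
open scoped ENNReal NNReal

namespace GibbsSingleton

/-- Configuration space `E^ι`. -/
abbrev Config (ι E : Type*) := ι → E

variable {ι E : Type*}

/-- The configuration equal to `σ` on `Λ` and to `ω` off `Λ`. -/
def subst [DecidableEq ι] (Λ : Finset ι) (σ : {x // x ∈ Λ} → E) (ω : Config ι E) :
    Config ι E := fun i => if h : i ∈ Λ then σ ⟨i, h⟩ else ω i

variable [MeasurableSpace E]

/-- The free kernel `λ_Λ` applied to an `ℝ≥0∞`-valued function:
`λ_Λ(h ∣ ω) = ∫ h(σ_Λ ω) λ^Λ(dσ_Λ)`. -/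
noncomputable def freeF [DecidableEq ι] (lam : ι → Measure E) (Λ : Finset ι)
    (h : Config ι E → ℝ≥0∞) (ω : Config ι E) : ℝ≥0∞ :=
  ∫⁻ σ : {x // x ∈ Λ} → E, h (subst Λ σ ω) ∂(Measure.pi fun i : {x // x ∈ Λ} => lam i.1)

/-- The function `ρ_i ρ_j⁻¹`, `ℝ≥0∞`-valued. -/
noncomputable def rat (ρ : ι → Config ι E → ℝ≥0) (i j : ι) (η : Config ι E) : ℝ≥0∞ :=
  (ρ i η : ℝ≥0∞) / (ρ j η : ℝ≥0∞)

/-- The set `b(j,V,ω)` of good configurations at site `j` given `ω` outside `V ∪ {j}`. -/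
noncomputable def bSet [DecidableEq ι] (lam : ι → Measure E) (ρ : ι → Config ι E → ℝ≥0)
    (j : ι) (V : Finset ι) (ω : Config ι E) : Set E :=
  {x | (∀ σ : {y // y ∈ V} → E, 0 < ρ j (subst V σ (Function.update ω j x))) ∧
    ∀ i, i ≠ j →
      0 < (⨅ σ : {y // y ∈ V} → E,
          freeF lam {i} (rat ρ i j) (subst V σ (Function.update ω j x))) ∧
      (⨆ σ : {y // y ∈ V} → E,
          freeF lam {i} (rat ρ i j) (subst V σ (Function.update ω j x))) < ⊤}

/-- The multi-site good set `b(V,W,ω)`. -/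
noncomputable def bSetF [DecidableEq ι] (lam : ι → Measure E) (ρ : ι → Config ι E → ℝ≥0)
    (V W : Finset ι) (ω : Config ι E) : Set ({x // x ∈ V} → E) :=
  {xV | ∀ k : {x // x ∈ V}, xV k ∈ bSet lam ρ k.1 ((V.erase k.1) ∪ W) ω}

/-- The set `B(j,V) = {ω : ω_j ∈ b(j,V,ω)}`. -/
noncomputable def BSet [DecidableEq ι] (lam : ι → Measure E) (ρ : ι → Config ι E → ℝ≥0)
    (j : ι) (V : Finset ι) : Set (Config ι E) :=
  {ω | ω j ∈ bSet lam ρ j V ω}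

/-- Hypothesis (H1): every good set `b(j,V,ω)` is nonempty. -/
def H1 [DecidableEq ι] (lam : ι → Measure E) (ρ : ι → Config ι E → ℝ≥0) : Prop :=
  ∀ (ω : Config ι E) (j : ι) (V : Finset ι), j ∉ V → (bSet lam ρ j V ω).Nonempty

/-- The order-consistency identity appearing in hypothesis (H2), with the convention
`1/∞ = 0` built into `ℝ≥0∞` division. -/
def H2id [DecidableEq ι] (lam : ι → Measure E) (ρ : ι → Config ι E → ℝ≥0)
    (i j : ι) (ω : Config ι E) : Prop :=
  ∀ xi ∈ bSet lam ρ i {j} ω, ∀ xj ∈ bSet lam ρ j {i} ω,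
    ((ρ i ω : ℝ≥0∞) * (ρ j (Function.update ω i xi) : ℝ≥0∞)) /
      ((ρ i (Function.update ω i xi) : ℝ≥0∞) *
        freeF lam {j} (rat ρ j i) (Function.update ω i xi))
    = ((ρ j ω : ℝ≥0∞) * (ρ i (Function.update ω j xj) : ℝ≥0∞)) /
      ((ρ j (Function.update ω j xj) : ℝ≥0∞) *
        freeF lam {i} (rat ρ i j) (Function.update ω j xj))

/-- Hypothesis (H2). -/
def H2 [DecidableEq ι] (lam : ι → Measure E) (ρ : ι → Config ι E → ℝ≥0) : Prop :=
  ∀ i j, i ≠ j → ∀ ω : Config ι E, H2id lam ρ i j ω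

/-- `R_Θ^Γ` evaluated using the choice `x_Θ`:
`((ρ_Θ/ρ_Γ) ⬝ λ_Γ(ρ_Γ ρ_Θ⁻¹))(x_Θ ω)`. -/
noncomputable def Rexpr [DecidableEq ι] (lam : ι → Measure E)
    (ρF : Finset ι → Config ι E → ℝ≥0) (Θ Γ : Finset ι) (x : {y // y ∈ Θ} → E)
    (ω : Config ι E) : ℝ≥0∞ :=
  ((ρF Θ (subst Θ x ω) : ℝ≥0∞) / (ρF Γ (subst Θ x ω) : ℝ≥0∞)) *
    freeF lam Γ (fun η => (ρF Γ η : ℝ≥0∞) / (ρF Θ η : ℝ≥0∞)) (subst Θ x ω)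

/-- The family `ρ_Λ` is obtained from the singletons `ρ_i` by the recursive construction
`ρ_{Λ∪{i}} = ρ_Λ / R_Λ^i`, `R_Λ^i(ω) = ((ρ_Λ/ρ_i) ⬝ λ_i(ρ_i ρ_Λ⁻¹))(x_Λ ω)`,
`x_Λ ∈ b(Λ,{i},ω)` (the value being independent of this choice). -/
def IsRec [DecidableEq ι] (lam : ι → Measure E) (ρ : ι → Config ι E → ℝ≥0)
    (ρF : Finset ι → Config ι E → ℝ≥0) : Prop :=
  (∀ ω, ρF ∅ ω = 1) ∧ (∀ i, ρF {i} = ρ i) ∧ (∀ Λ, Measurable (ρF Λ)) ∧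
  ∀ (Λ : Finset ι) (i : ι), i ∉ Λ → ∀ ω : Config ι E,
    (∀ x ∈ bSetF lam ρ Λ {i} ω, ∀ x' ∈ bSetF lam ρ Λ {i} ω,
      Rexpr lam ρF Λ {i} x ω = Rexpr lam ρF Λ {i} x' ω) ∧
    ∀ x ∈ bSetF lam ρ Λ {i} ω,
      (ρF (insert i Λ) ω : ℝ≥0∞) = (ρF Λ ω : ℝ≥0∞) / Rexpr lam ρF Λ {i} x ω

/-- The sub-σ-algebra `𝓕_U` of events generated by the coordinates in `U`. -/
def cylSigma (E : Type*) [MeasurableSpace E] {ι : Type*} (U : Set ι) :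
    MeasurableSpace (Config ι E) :=
  MeasurableSpace.comap (fun ω (i : U) => ω i.1) MeasurableSpace.pi

/-- A specification: a family of probability kernels, measurable w.r.t. the outside
σ-algebra, proper, and consistent. -/
def IsSpecification (γ : Finset ι → Kernel (Config ι E) (Config ι E)) : Prop :=
  (∀ Λ, IsMarkovKernel (γ Λ)) ∧
  (∀ (Λ : Finset ι) (A : Set (Config ι E)), MeasurableSet A →
    Measurable[cylSigma E ((Λ : Set ι)ᶜ)] fun ω => γ Λ ω A) ∧
  (∀ (Λ : Finset ι) (B : Set (Config ι E)), MeasurableSet[cylSigma E ((Λ : Set ι)ᶜ)] B →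
    ∀ ω, γ Λ ω B = B.indicator (fun _ => (1 : ℝ≥0∞)) ω) ∧
  (∀ Λ Δ : Finset ι, Λ ⊆ Δ → (γ Λ).comp (γ Δ) = γ Δ)

/-- The kernel family `γ` is `{ρ_Λ λ_Λ}`. -/
def MatchesDensity [DecidableEq ι] (lam : ι → Measure E)
    (γ : Finset ι → Kernel (Config ι E) (Config ι E))
    (ρF : Finset ι → Config ι E → ℝ≥0) : Prop :=
  ∀ (Λ : Finset ι) (ω : Config ι E) (A : Set (Config ι E)), MeasurableSet A →
    γ Λ ω A = freeF lam Λ (fun η => (ρF Λ η : ℝ≥0∞) * A.indicator (fun _ => 1) η) ω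

end GibbsSingleton


/-!
Write `ρ_{Λ ∪ {k}} = ρ_Λ / R_Λ^k` with `R_Λ^k(ω) = ((ρ_Λ / ρ_k) ⬝ λ_k(ρ_k ρ_Λ⁻¹))(x_Λ ω)` and
argue by induction on `Λ`. The outer factor `ρ_Λ` and the prefactor of `R_Λ^k` are sequentially
continuous by induction, so everything rests on continuity of `ω ↦ λ_k(ρ_k ρ_Λ⁻¹)(x_Λ ω)`, which
follows from dominated convergence. The dominating function comes from a second induction, run on
configurations pinned to uniformly good values `x_Λ`: there `ρ_{Λ ∪ {k}} = ρ_k / λ_k(ρ_k ρ_Λ⁻¹)`,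
so `ρ_i ρ_{Λ ∪ {k}}⁻¹ ≤ C ⬝ sup_ω (ρ_i ρ_k⁻¹)(σ_i x_k ω)` as soon as `λ_k(ρ_k ρ_Λ⁻¹) ≤ C` on pinned
configurations, and integrating this bound in `σ_i` gives the next such constant.
-/

open MeasureTheory
open scoped ENNReal NNReal

namespace ENNReal

variable {a b c : ℝ≥0∞}

lemma div_div_eq_mul_div_of_ne (hc : c ≠ ∞ ∨ b ≠ ∞) (hc₀ : c ≠ 0 ∨ b ≠ 0) :
    a / (b / c) = a * c / b := by
  rw [div_eq_mul_inv a, ENNReal.inv_div hc hc₀, mul_div_assoc]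

lemma div_div_mul_eq_div (ha₀ : a ≠ 0) (ha : a ≠ ∞) (hc₀ : c ≠ 0) (hc : c ≠ ∞) :
    a / (a / b * c) = b / c := by
  rw [mul_comm, ← mul_div_assoc, mul_comm, ← div_div_eq_mul_div_of_ne (Or.inl hc) (Or.inl hc₀),
    ENNReal.div_div_cancel ha₀ ha]

lemma div_div_le_mul_div {C : ℝ≥0∞} (hb : b ≠ ∞) (hc₀ : c ≠ 0) (hcC : c ≤ C) :
    a / (b / c) ≤ C * (a / b) := by
  rw [div_div_eq_mul_div_of_ne (Or.inr hb) (Or.inl hc₀), mul_comm, mul_div_assoc]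
  gcongr

end ENNReal

section SeqContinuous

variable {X : Type*} [TopologicalSpace X] {f g : X → ℝ≥0∞}

lemma SeqContinuous.ennreal_mul (hf : SeqContinuous f) (hg : SeqContinuous g)
    (h₁ : ∀ x, f x ≠ 0 ∨ g x ≠ ∞) (h₂ : ∀ x, g x ≠ 0 ∨ f x ≠ ∞) :
    SeqContinuous fun x => f x * g x :=
  fun _ _ hu => ENNReal.Tendsto.mul (hf hu) (h₁ _) (hg hu) (h₂ _)

lemma SeqContinuous.ennreal_div (hf : SeqContinuous f) (hg : SeqContinuous g)
    (h₁ : ∀ x, f x ≠ 0 ∨ g x ≠ 0) (h₂ : ∀ x, g x ≠ ∞ ∨ f x ≠ ∞) :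
    SeqContinuous fun x => f x / g x :=
  fun _ _ hu => ENNReal.Tendsto.div (hf hu) (h₁ _) (hg hu) (h₂ _)

lemma seqContinuous_coe_nnreal_iff {f : X → ℝ≥0} :
    SeqContinuous (fun x => (f x : ℝ≥0∞)) ↔ SeqContinuous f :=
  forall₂_congr fun _ _ => imp_congr_right fun _ => ENNReal.tendsto_coe

lemma SeqContinuous.lintegral_of_dominated {α : Type*} [MeasurableSpace α] {μ : Measure α}
    {F : X → α → ℝ≥0∞} (bound : α → ℝ≥0∞) (hF_meas : ∀ x, Measurable (F x))
    (h_bound : ∀ x a, F x a ≤ bound a) (h_fin : ∫⁻ a, bound a ∂μ ≠ ∞)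
    (h_cont : ∀ a, SeqContinuous fun x => F x a) :
    SeqContinuous fun x => ∫⁻ a, F x a ∂μ :=
  fun _ _ hu => tendsto_lintegral_of_dominated_convergence bound (fun _ => hF_meas _)
    (fun _ => ae_of_all _ (h_bound _)) h_fin (ae_of_all _ fun a => h_cont a hu)

end SeqContinuous

namespace GibbsSingleton

variable {ι E : Type*}

noncomputable def ratF (ρ : ι → Config ι E → ℝ≥0) (ρF : Finset ι → Config ι E → ℝ≥0)
    (i : ι) (Λ : Finset ι) (η : Config ι E) : ℝ≥0∞ :=
  (ρ i η : ℝ≥0∞) / (ρF Λ η : ℝ≥0∞)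

lemma measurable_ratF [MeasurableSpace E] {ρ : ι → Config ι E → ℝ≥0}
    {ρF : Finset ι → Config ι E → ℝ≥0} {i : ι} {Λ : Finset ι} (hρ : Measurable (ρ i))
    (hρF : Measurable (ρF Λ)) : Measurable (ratF ρ ρF i Λ) :=
  hρ.coe_nnreal_ennreal.div hρF.coe_nnreal_ennreal

section Subst

variable [DecidableEq ι] {Λ : Finset ι}

lemma subst_apply_of_mem {σ : Λ → E} {ω : Config ι E} {m : ι} (hm : m ∈ Λ) :
    subst Λ σ ω m = σ ⟨m, hm⟩ :=
  dif_pos hm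

lemma subst_apply_of_notMem {σ : Λ → E} {ω : Config ι E} {m : ι} (hm : m ∉ Λ) :
    subst Λ σ ω m = ω m :=
  dif_neg hm

lemma subst_eq_self {x : Λ → E} {ω : Config ι E} (h : ∀ j : Λ, ω j = x j) :
    subst Λ x ω = ω := by
  funext m
  by_cases hm : m ∈ Λ
  · rw [subst_apply_of_mem hm, h ⟨m, hm⟩]
  · rw [subst_apply_of_notMem hm]

lemma subst_restrict_eq {η ω : Config ι E} (h : ∀ m ∉ Λ, η m = ω m) :
    subst Λ (fun j => η j) ω = η := by
  funext m
  by_cases hm : m ∈ Λ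
  · rw [subst_apply_of_mem hm]
  · rw [subst_apply_of_notMem hm, h m hm]

lemma subst_restrict₂_subst {Δ : Finset ι} (h : Λ ⊆ Δ) (x : Δ → E) (ω : Config ι E) :
    subst Λ (Finset.restrict₂ (π := fun _ => E) h x) (subst Δ x ω) = subst Δ x ω :=
  subst_eq_self fun j => subst_apply_of_mem (h j.2)

lemma update_subst {k : ι} (hk : k ∉ Λ) (x : Λ → E) (ω : Config ι E) (e : E) :
    Function.update (subst Λ x ω) k e = subst Λ x (Function.update ω k e) := by
  funext m
  by_cases hm : m ∈ Λ
  · rw [Function.update_of_ne (ne_of_mem_of_not_mem hm hk), subst_apply_of_mem hm,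
      subst_apply_of_mem hm]
  · rw [subst_apply_of_notMem hm]
    by_cases hmk : m = k
    · subst hmk; rw [Function.update_self, Function.update_self]
    · rw [Function.update_of_ne hmk, Function.update_of_ne hmk, subst_apply_of_notMem hm]

lemma continuous_subst [TopologicalSpace E] (x : Λ → E) : Continuous (subst Λ x) := by
  refine continuous_pi fun m => ?_
  by_cases hm : m ∈ Λ
  · simp only [subst_apply_of_mem hm, continuous_const]
  · simp only [subst_apply_of_notMem hm, continuous_apply]

noncomputable def ratSup (ρ : ι → Config ι E → ℝ≥0) (i j : ι) (x σ : E) : ℝ≥0∞ :=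
  ⨆ ω : Config ι E, rat ρ i j (Function.update (Function.update ω j x) i σ)

lemma rat_le_ratSup (ρ : ι → Config ι E → ℝ≥0) (i j : ι) (ξ : Config ι E) :
    rat ρ i j ξ ≤ ratSup ρ i j (ξ j) (ξ i) := by
  refine le_iSup_of_le ξ (le_of_eq ?_)
  rw [Function.update_eq_self, Function.update_eq_self]

lemma subst_singleton (i : ι) (σ : ({i} : Finset ι) → E) (ω : Config ι E) :
    subst {i} σ ω = Function.update ω i (σ default) := by
  funext m
  by_cases hm : m = i
  · subst hm
    rw [subst_apply_of_mem (Finset.mem_singleton_self m), Function.update_self]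
    rfl
  · rw [subst_apply_of_notMem (by simpa using hm), Function.update_of_ne hm]

end Subst

section GoodFamilies

variable [DecidableEq ι] [MeasurableSpace E] {lam : ι → Measure E} {ρ : ι → Config ι E → ℝ≥0}

variable (lam) in
lemma freeF_singleton (i : ι) (h : Config ι E → ℝ≥0∞) (ω : Config ι E) :
    freeF lam {i} h ω = ∫⁻ e, h (Function.update ω i e) ∂lam i := by
  simp only [freeF, subst_singleton]
  exact ((measurePreserving_piUnique fun m : ({i} : Finset ι) => lam m.1).lintegral_map_equiv
    (fun e => h (Function.update ω i e)) _).symm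

lemma pos_of_mem_bSet {j : ι} {V : Finset ι} {η : Config ι E} (h : η j ∈ bSet lam ρ j V η) :
    0 < ρ j η := by
  simpa only [Function.update_eq_self, subst_restrict_eq fun _ _ => rfl] using h.1 fun m => η m

lemma bSet_anti {j : ι} {V V' : Finset ι} (hV : V ⊆ V') (ω : Config ι E) :
    bSet lam ρ j V' ω ⊆ bSet lam ρ j V ω := by
  intro x hx
  have key : ∀ σ : V → E, subst V σ (Function.update ω j x) =
      subst V' (fun m => subst V σ (Function.update ω j x) m) (Function.update ω j x) :=
    fun σ => (subst_restrict_eq fun m hm => subst_apply_of_notMem fun h => hm (hV h)).symm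
  refine ⟨fun σ => key σ ▸ hx.1 _, fun i hi => ⟨?_, ?_⟩⟩
  · exact (hx.2 i hi).1.trans_le (le_iInf fun σ => key σ ▸ iInf_le_of_le _ le_rfl)
  · exact (iSup_le fun σ => key σ ▸ le_iSup_of_le _ le_rfl).trans_lt (hx.2 i hi).2

variable (lam ρ) in
def IsUniformlyGood (j : ι) (V : Finset ι) (x : E) : Prop :=
  (∀ ω, x ∈ bSet lam ρ j V ω) ∧ ∀ i ∈ V, ∫⁻ σ, ratSup ρ i j x σ ∂lam i < ∞

variable (lam ρ) in
/-- `W` holds the sites that are still to be added to `Λ`. -/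
def IsUniformlyGoodF (Λ W : Finset ι) (x : Λ → E) : Prop :=
  Disjoint Λ W ∧ ∀ j : Λ, IsUniformlyGood lam ρ j (Λ.erase j ∪ W) (x j)

lemma exists_isUniformlyGoodF
    (hgood : ∀ (V : Finset ι) (j : ι), j ∉ V → ∃ x, IsUniformlyGood lam ρ j V x)
    {Λ W : Finset ι} (hΛW : Disjoint Λ W) : ∃ x, IsUniformlyGoodF lam ρ Λ W x := by
  have hj : ∀ j : Λ, (j : ι) ∉ Λ.erase j ∪ W := fun j => by
    simp [Finset.disjoint_left.1 hΛW j.2]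
  choose x hx using fun j : Λ => hgood _ j (hj j)
  exact ⟨x, hΛW, hx⟩

lemma IsUniformlyGoodF.restrict₂ {Λ W : Finset ι} {k : ι} (hk : k ∉ Λ) {x : ↥(insert k Λ) → E}
    (hx : IsUniformlyGoodF lam ρ (insert k Λ) W x) :
    IsUniformlyGoodF lam ρ Λ (insert k W)
      (Finset.restrict₂ (π := fun _ => E) (Finset.subset_insert k Λ) x) := by
  refine ⟨Finset.disjoint_insert_right.2 ⟨hk, hx.1.mono_left (Finset.subset_insert k Λ)⟩,
    fun j => ?_⟩
  have hjk : (j : ι) ≠ k := ne_of_mem_of_not_mem j.2 hk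
  have hV : (insert k Λ).erase j ∪ W = Λ.erase j ∪ insert k W := by
    ext m
    simp only [Finset.mem_union, Finset.mem_erase, Finset.mem_insert]
    grind
  rw [Finset.restrict₂, ← hV]
  exact hx.2 ⟨j, Finset.subset_insert k Λ j.2⟩

lemma IsUniformlyGoodF.mem_bSetF {Λ W : Finset ι} {x : Λ → E}
    (hx : IsUniformlyGoodF lam ρ Λ W x) {k : ι} (hk : k ∈ W) (ω : Config ι E) :
    x ∈ bSetF lam ρ Λ {k} ω :=
  fun j => bSet_anti (Finset.union_subset_union_right (Finset.singleton_subset_iff.2 hk)) ω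
    ((hx.2 j).1 ω)

end GoodFamilies

section Construction

variable [DecidableEq ι] [MeasurableSpace E] {lam : ι → Measure E} {ρ : ι → Config ι E → ℝ≥0}
  {ρF : Finset ι → Config ι E → ℝ≥0} {Λ : Finset ι} {k : ι}

lemma freeF_ratF_ne_zero {i : ι} {ζ : Config ι E} (hρ : Measurable (ρ i))
    (hρF : Measurable (ρF Λ)) (hnorm : freeF lam {i} (fun η => (ρ i η : ℝ≥0∞)) ζ = 1) :
    freeF lam {i} (ratF ρ ρF i Λ) ζ ≠ 0 := by
  rw [freeF_singleton] at hnorm ⊢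
  intro h₀
  have hm : Measurable fun e => ratF ρ ρF i Λ (Function.update ζ i e) :=
    (measurable_ratF hρ hρF).comp (measurable_update ζ)
  rw [lintegral_eq_zero_iff hm] at h₀
  have : (fun e => (ρ i (Function.update ζ i e) : ℝ≥0∞)) =ᵐ[lam i] 0 :=
    h₀.mono fun e he => by simpa [ratF] using he
  simp [lintegral_congr_ae this] at hnorm

lemma rhoF_insert_eq (hrec : IsRec lam ρ ρF) (hk : k ∉ Λ) {W : Finset ι} {x : Λ → E}
    (hx : IsUniformlyGoodF lam ρ Λ W x) (hkW : k ∈ W) (ω : Config ι E) :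
    (ρF (insert k Λ) ω : ℝ≥0∞) = ρF Λ ω / (ρF Λ (subst Λ x ω) / ρ k (subst Λ x ω) *
      freeF lam {k} (ratF ρ ρF k Λ) (subst Λ x ω)) := by
  rw [(hrec.2.2.2 Λ k hk ω).2 x (hx.mem_bSetF hkW ω), Rexpr, hrec.2.1 k]
  rfl

variable (lam ρ ρF) in
def PosOnGood (Λ : Finset ι) : Prop :=
  ∀ W x, IsUniformlyGoodF lam ρ Λ W x → ∀ ω, 0 < ρF Λ (subst Λ x ω)

variable (lam ρ ρF) in
def BoundedOnGood (Λ : Finset ι) : Prop :=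
  ∀ W x, IsUniformlyGoodF lam ρ Λ W x → ∀ i ∈ W,
    ∃ C ≠ ∞, ∀ ω, freeF lam {i} (ratF ρ ρF i Λ) (subst Λ x ω) ≤ C

variable (lam ρ ρF) in
def DominatedOnGood (Λ : Finset ι) : Prop :=
  ∀ W x, IsUniformlyGoodF lam ρ Λ W x → ∀ i ∈ W,
    ∃ g : E → ℝ≥0∞, ∫⁻ e, g e ∂lam i ≠ ∞ ∧ ∀ ω, ratF ρ ρF i Λ (subst Λ x ω) ≤ g (ω i)

lemma DominatedOnGood.boundedOnGood (h : DominatedOnGood lam ρ ρF Λ) :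
    BoundedOnGood lam ρ ρF Λ := by
  intro W x hx i hi
  obtain ⟨g, hg, hle⟩ := h W x hx i hi
  have hiΛ : i ∉ Λ := Finset.disjoint_right.1 hx.1 hi
  refine ⟨∫⁻ e, g e ∂lam i, hg, fun ω => ?_⟩
  rw [freeF_singleton]
  refine lintegral_mono fun e => ?_
  simpa only [update_subst hiΛ, Function.update_self] using hle (Function.update ω i e)

lemma boundedOnGood_empty (hempty : ∀ ω, ρF ∅ ω = 1)
    (hnorm : ∀ i ω, freeF lam {i} (fun η => (ρ i η : ℝ≥0∞)) ω = 1) :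
    BoundedOnGood lam ρ ρF ∅ := by
  have hratF : ∀ i, ratF ρ ρF i ∅ = fun η => (ρ i η : ℝ≥0∞) :=
    fun i => funext fun η => by simp [ratF, hempty]
  exact fun _ _ _ i _ => ⟨1, ENNReal.one_ne_top, fun ω => (hratF i ▸ hnorm i _).le⟩

lemma exists_rhoF_insert_subst_eq_div (hrec : IsRec lam ρ ρF) (hρk : Measurable (ρ k))
    (hnorm : ∀ ω, freeF lam {k} (fun η => (ρ k η : ℝ≥0∞)) ω = 1) (hk : k ∉ Λ)
    (hpos : PosOnGood lam ρ ρF Λ) (hbdd : BoundedOnGood lam ρ ρF Λ) {W : Finset ι}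
    {x : ↥(insert k Λ) → E} (hx : IsUniformlyGoodF lam ρ (insert k Λ) W x) :
    ∃ C ≠ ∞, ∀ ω, freeF lam {k} (ratF ρ ρF k Λ) (subst (insert k Λ) x ω) ≤ C ∧
      (ρF (insert k Λ) (subst (insert k Λ) x ω) : ℝ≥0∞) =
        ρ k (subst (insert k Λ) x ω) / freeF lam {k} (ratF ρ ρF k Λ) (subst (insert k Λ) x ω) := by
  have hxr := hx.restrict₂ hk
  obtain ⟨C, hC, hle⟩ := hbdd _ _ hxr k (Finset.mem_insert_self k W)
  refine ⟨C, hC, fun ω => ?_⟩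
  have hI := hle (subst (insert k Λ) x ω)
  have hρ := hpos _ _ hxr (subst (insert k Λ) x ω)
  rw [subst_restrict₂_subst] at hI hρ
  refine ⟨hI, ?_⟩
  rw [rhoF_insert_eq hrec hk hxr (Finset.mem_insert_self k W), subst_restrict₂_subst]
  exact ENNReal.div_div_mul_eq_div (by exact_mod_cast hρ.ne') ENNReal.coe_ne_top
    (freeF_ratF_ne_zero hρk (hrec.2.2.1 Λ) (hnorm _)) (ne_top_of_le_ne_top hC hI)

lemma posOnGood_insert (hrec : IsRec lam ρ ρF) (hρk : Measurable (ρ k))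
    (hnorm : ∀ ω, freeF lam {k} (fun η => (ρ k η : ℝ≥0∞)) ω = 1) (hk : k ∉ Λ)
    (hpos : PosOnGood lam ρ ρF Λ) (hbdd : BoundedOnGood lam ρ ρF Λ) :
    PosOnGood lam ρ ρF (insert k Λ) := by
  intro W x hx ω
  obtain ⟨C, hC, h⟩ := exists_rhoF_insert_subst_eq_div hrec hρk hnorm hk hpos hbdd hx
  obtain ⟨hI, hρF⟩ := h ω
  have hk' : k ∈ insert k Λ := Finset.mem_insert_self k Λ
  have hρk_pos : 0 < ρ k (subst (insert k Λ) x ω) := by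
    refine pos_of_mem_bSet (lam := lam) (V := (insert k Λ).erase k ∪ W) ?_
    rw [subst_apply_of_mem hk']
    exact (hx.2 ⟨k, hk'⟩).1 _
  rw [← ENNReal.coe_pos, hρF]
  exact ENNReal.div_pos (by exact_mod_cast hρk_pos.ne') (ne_top_of_le_ne_top hC hI)

lemma dominatedOnGood_insert (hrec : IsRec lam ρ ρF) (hρk : Measurable (ρ k))
    (hnorm : ∀ ω, freeF lam {k} (fun η => (ρ k η : ℝ≥0∞)) ω = 1) (hk : k ∉ Λ)
    (hpos : PosOnGood lam ρ ρF Λ) (hbdd : BoundedOnGood lam ρ ρF Λ) :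
    DominatedOnGood lam ρ ρF (insert k Λ) := by
  intro W x hx i hi
  obtain ⟨C, hC, h⟩ := exists_rhoF_insert_subst_eq_div hrec hρk hnorm hk hpos hbdd hx
  have hk' : k ∈ insert k Λ := Finset.mem_insert_self k Λ
  have hiΛ : i ∉ insert k Λ := Finset.disjoint_right.1 hx.1 hi
  refine ⟨fun e => C * ratSup ρ i k (x ⟨k, hk'⟩) e, ?_, fun ω => ?_⟩
  · rw [lintegral_const_mul' _ _ hC]
    exact ENNReal.mul_ne_top hC ((hx.2 ⟨k, hk'⟩).2 i (Finset.mem_union_right _ hi)).ne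
  · obtain ⟨hI, hρF⟩ := h ω
    set ξ := subst (insert k Λ) x ω with hξ
    calc ratF ρ ρF i (insert k Λ) ξ
        = ρ i ξ / (ρ k ξ / freeF lam {k} (ratF ρ ρF k Λ) ξ) := by rw [ratF, hρF]
      _ ≤ C * rat ρ i k ξ := ENNReal.div_div_le_mul_div ENNReal.coe_ne_top
          (freeF_ratF_ne_zero hρk (hrec.2.2.1 Λ) (hnorm _)) hI
      _ ≤ C * ratSup ρ i k (x ⟨k, hk'⟩) (ω i) := by
          gcongr
          simpa only [hξ, subst_apply_of_mem hk', subst_apply_of_notMem hiΛ]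
            using rat_le_ratSup ρ i k ξ

lemma posOnGood_and_boundedOnGood (hrec : IsRec lam ρ ρF) (hmeas : ∀ i, Measurable (ρ i))
    (hnorm : ∀ i ω, freeF lam {i} (fun η => (ρ i η : ℝ≥0∞)) ω = 1) (Λ : Finset ι) :
    PosOnGood lam ρ ρF Λ ∧ BoundedOnGood lam ρ ρF Λ := by
  induction Λ using Finset.induction_on with
  | empty => exact ⟨fun _ _ _ ω => by simp [hrec.1], boundedOnGood_empty hrec.1 hnorm⟩
  | insert k Λ hk ih =>
    exact ⟨posOnGood_insert hrec (hmeas k) (hnorm k) hk ih.1 ih.2,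
      (dominatedOnGood_insert hrec (hmeas k) (hnorm k) hk ih.1 ih.2).boundedOnGood⟩

lemma dominatedOnGood_of_nonempty (hrec : IsRec lam ρ ρF) (hmeas : ∀ i, Measurable (ρ i))
    (hnorm : ∀ i ω, freeF lam {i} (fun η => (ρ i η : ℝ≥0∞)) ω = 1) (hΛ : Λ.Nonempty) :
    DominatedOnGood lam ρ ρF Λ := by
  obtain ⟨a, ha⟩ := hΛ
  have h := posOnGood_and_boundedOnGood hrec hmeas hnorm (Λ.erase a)
  rw [← Finset.insert_erase ha]
  exact dominatedOnGood_insert hrec (hmeas a) (hnorm a) (Finset.notMem_erase a Λ) h.1 h.2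

end Construction

section Continuity

variable [DecidableEq ι] [MeasurableSpace E] [TopologicalSpace E] {lam : ι → Measure E}
  {ρ : ι → Config ι E → ℝ≥0} {ρF : Finset ι → Config ι E → ℝ≥0} {Λ : Finset ι} {k : ι}

lemma seqContinuous_rhoF_insert (hrec : IsRec lam ρ ρF) (hρk : Measurable (ρ k))
    (hnorm : ∀ ω, freeF lam {k} (fun η => (ρ k η : ℝ≥0∞)) ω = 1)
    (hρk_cont : SeqContinuous (ρ k)) (hk : k ∉ Λ) {x : Λ → E}
    (hx : IsUniformlyGoodF lam ρ Λ {k} x) (hΛ : SeqContinuous (ρF Λ))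
    (hpos : ∀ ω, 0 < ρF Λ (subst Λ x ω)) {g : E → ℝ≥0∞} (hg : ∫⁻ e, g e ∂lam k ≠ ∞)
    (hdom : ∀ ω, ratF ρ ρF k Λ (subst Λ x ω) ≤ g (ω k)) :
    SeqContinuous (ρF (insert k Λ)) := by
  have hsubst : SeqContinuous (subst Λ x) := (continuous_subst x).seqContinuous
  have hρk_subst : SeqContinuous fun ω => (ρ k (subst Λ x ω) : ℝ≥0∞) :=
    seqContinuous_coe_nnreal_iff.2 fun _ _ hu => hρk_cont (hsubst hu)
  have hρF_subst : SeqContinuous fun ω => (ρF Λ (subst Λ x ω) : ℝ≥0∞) :=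
    seqContinuous_coe_nnreal_iff.2 fun _ _ hu => hΛ (hsubst hu)
  have hρF₀ : ∀ ω, (ρF Λ (subst Λ x ω) : ℝ≥0∞) ≠ 0 := fun ω => by exact_mod_cast (hpos ω).ne'
  have hI₀ : ∀ ω, freeF lam {k} (ratF ρ ρF k Λ) (subst Λ x ω) ≠ 0 :=
    fun ω => freeF_ratF_ne_zero hρk (hrec.2.2.1 Λ) (hnorm _)
  have hratF : SeqContinuous fun ω => ratF ρ ρF k Λ (subst Λ x ω) :=
    hρk_subst.ennreal_div hρF_subst (fun ω => Or.inr (hρF₀ ω))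
      (fun _ => Or.inl ENNReal.coe_ne_top)
  have hI : SeqContinuous fun ω => freeF lam {k} (ratF ρ ρF k Λ) (subst Λ x ω) := by
    simp only [freeF_singleton]
    refine SeqContinuous.lintegral_of_dominated g
      (fun ω => (measurable_ratF hρk (hrec.2.2.1 Λ)).comp (measurable_update _))
      (fun ω e => ?_) hg (fun e => ?_)
    · simpa only [update_subst hk, Function.update_self] using hdom (Function.update ω k e)
    · simp only [update_subst hk]
      exact fun _ _ hu => hratF ((continuous_id.update k continuous_const).seqContinuous hu)
  have hq₀ : ∀ ω, (ρF Λ (subst Λ x ω) : ℝ≥0∞) / ρ k (subst Λ x ω) ≠ 0 :=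
    fun ω => (ENNReal.div_pos (hρF₀ ω) ENNReal.coe_ne_top).ne'
  have hR := (hρF_subst.ennreal_div hρk_subst (fun ω => Or.inl (hρF₀ ω))
    (fun _ => Or.inl ENNReal.coe_ne_top)).ennreal_mul hI
    (fun ω => Or.inl (hq₀ ω)) (fun ω => Or.inl (hI₀ ω))
  refine seqContinuous_coe_nnreal_iff.1 ?_
  simp only [rhoF_insert_eq hrec hk hx (Finset.mem_singleton_self k)]
  exact (seqContinuous_coe_nnreal_iff.2 hΛ).ennreal_div hR (fun ω => Or.inr (mul_ne_zero (hq₀ ω) (hI₀ ω)))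
    (fun _ => Or.inr ENNReal.coe_ne_top)

end Continuity

end GibbsSingleton

open GibbsSingleton MeasureTheory ProbabilityTheory

theorem constructed_family_seqContinuous_general
    {d : ℕ} {E : Type*} [TopologicalSpace E] [MeasurableSpace E]
    (lam : (Fin d → ℤ) → Measure E)
    (ρ : (Fin d → ℤ) → Config (Fin d → ℤ) E → ℝ≥0)
    (hmeas : ∀ i, Measurable (ρ i))
    (hnorm : ∀ (i : Fin d → ℤ) (ω : Config (Fin d → ℤ) E),
      freeF lam {i} (fun η => (ρ i η : ℝ≥0∞)) ω = 1)
    (ρF : Finset (Fin d → ℤ) → Config (Fin d → ℤ) E → ℝ≥0)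
    (hrec : IsRec lam ρ ρF)
    (hcont : ∀ i, SeqContinuous (ρ i))
    (hint : ∀ (V : Finset (Fin d → ℤ)) (j : Fin d → ℤ), j ∉ V →
      ∃ x : E, (∀ ω : Config (Fin d → ℤ) E, x ∈ bSet lam ρ j V ω) ∧
        ∀ i ∈ V,
          (∫⁻ σ : E, (⨆ ω : Config (Fin d → ℤ) E,
            rat ρ i j (Function.update (Function.update ω j x) i σ)) ∂(lam i)) < ⊤) :
    ∀ Λ : Finset (Fin d → ℤ), SeqContinuous (ρF Λ) := by
  intro Λ
  induction Λ using Finset.induction_on with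
  | empty => simpa only [funext hrec.1] using continuous_const.seqContinuous
  | insert k Λ hk ih =>
    rcases Λ.eq_empty_or_nonempty with rfl | hΛ
    · simpa only [insert_empty_eq, hrec.2.1 k] using hcont k
    obtain ⟨x, hx⟩ := exists_isUniformlyGoodF hint (Finset.disjoint_singleton_right.2 hk)
    obtain ⟨g, hg, hdom⟩ :=
      dominatedOnGood_of_nonempty hrec hmeas hnorm hΛ _ x hx k (Finset.mem_singleton_self k)
    exact seqContinuous_rhoF_insert hrec (hmeas k) (hnorm k) (hcont k) hk hx ih
      ((posOnGood_and_boundedOnGood hrec hmeas hnorm Λ).1 _ x hx) hg hdom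

/-- **Theorem 1 (II), continuity.**  Suppose `E` is a topological space with its Borel
σ-algebra and `Ω` carries the product topology.  If the singleton densities `ρ_i` are
sequentially continuous and for each finite `V` and `j ∉ V` there is a uniformly good
configuration `x_j ∈ ⋂_ω b(j,V,ω)` with
`∫ sup_ω (ρ_i ρ_j⁻¹)(σ_i x_j ω) λ^i(dσ_i) < ∞` for all `i ∈ V`, then each function
`ρ_Λ` of the recursively constructed family is sequentially continuous. -/
theorem constructed_family_seqContinuous
    {d : ℕ} (hd : 0 < d) {E : Type*} [TopologicalSpace E] [MeasurableSpace E] [BorelSpace E]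
    (lam : (Fin d → ℤ) → Measure E)
    (ρ : (Fin d → ℤ) → Config (Fin d → ℤ) E → ℝ≥0)
    (hmeas : ∀ i, Measurable (ρ i))
    (hnorm : ∀ (i : Fin d → ℤ) (ω : Config (Fin d → ℤ) E),
      freeF lam {i} (fun η => (ρ i η : ℝ≥0∞)) ω = 1)
    (h1 : H1 lam ρ) (h2 : H2 lam ρ)
    (ρF : Finset (Fin d → ℤ) → Config (Fin d → ℤ) E → ℝ≥0)
    (hrec : IsRec lam ρ ρF)
    (hcont : ∀ i, SeqContinuous (ρ i))
    (hint : ∀ (V : Finset (Fin d → ℤ)) (j : Fin d → ℤ), j ∉ V →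
      ∃ x : E, (∀ ω : Config (Fin d → ℤ) E, x ∈ bSet lam ρ j V ω) ∧
        ∀ i ∈ V,
          (∫⁻ σ : E, (⨆ ω : Config (Fin d → ℤ) E,
            rat ρ i j (Function.update (Function.update ω j x) i σ)) ∂(lam i)) < ⊤) :
    ∀ Λ : Finset (Fin d → ℤ), SeqContinuous (ρF Λ) :=
  constructed_family_seqContinuous_general lam ρ hmeas hnorm ρF hrec hcont hint
end

section
/- Let {γ_Λ}_{Λ∈𝒮} be a specification on (Ω,𝓕). Then for each finite Λ ⊆ ℤ^d, each finite Γ ⊆ ℤ^d∖Λ, and all bounded measurable functions f, g on Ω: γ_{Λ∪Γ}[f · γ_Λ(γ_Γ(g))] = γ_{Λ∪Γ}[g · γ_Γ(γ_Λ(f))]. -/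
open MeasureTheory ProbabilityTheory
open scoped ENNReal NNReal

open GibbsSingleton MeasureTheory ProbabilityTheory

/-!
If `V ⊆ Δ`, consistency `γ_V γ_Δ = γ_Δ` together with properness of `γ_V` (an
`𝓕_{Vᶜ}`-measurable factor comes out of `γ_V`) makes `γ_V` symmetric with respect to
`γ_Δ(· ∣ ω)`: both `γ_Δ[h · γ_V k]` and `γ_Δ[k · γ_V h]` equal `γ_Δ[γ_V h · γ_V k]`.
Using this for `V = Λ` and then for `V = Γ` inside `Δ = Λ ∪ Γ`, both sides of the
exchange identity become `γ_Δ[γ_Λ f · γ_Γ g]`.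
-/
namespace ProbabilityTheory.Kernel

variable {X : Type*} {𝓑 : MeasurableSpace X} [𝓧 : MeasurableSpace X] {κ ν : Kernel X X}

noncomputable def coarsenSource (κ : Kernel X X)
    (hκ : ∀ A, MeasurableSet A → Measurable[𝓑] fun x => κ x A) : Kernel[𝓑, 𝓧] X X :=
  @Kernel.mk X X 𝓑 𝓧 κ (Measure.measurable_of_measurable_coe (mβ := 𝓑) κ hκ)

@[simp]
lemma coarsenSource_apply (hκ : ∀ A, MeasurableSet A → Measurable[𝓑] fun x => κ x A) (x : X) :
    κ.coarsenSource hκ x = κ x :=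
  rfl

lemma isProper_coarsenSource (h𝓑𝓧 : 𝓑 ≤ 𝓧)
    (hκ : ∀ A, MeasurableSet A → Measurable[𝓑] fun x => κ x A)
    (hproper : ∀ B, MeasurableSet[𝓑] B → ∀ x, κ x B = B.indicator (fun _ => 1) x) :
    (κ.coarsenSource hκ).IsProper := by
  refine (isProper_iff_restrict_eq_indicator_smul h𝓑𝓧).2 fun B hB x => ?_
  rw [Kernel.restrict_apply]
  by_cases hx : x ∈ B
  · have hBc : κ x Bᶜ = 0 := by simp [hproper Bᶜ hB.compl x, hx]
    simpa [hx] using Measure.restrict_eq_self_of_ae_mem (ae_iff.2 hBc)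
  · have hB0 : κ x B = 0 := by simp [hproper B hB x, hx]
    simpa [hx] using Measure.restrict_eq_zero.2 hB0

lemma lintegral_mul_eq_lintegral_lintegral_mul (h𝓑𝓧 : 𝓑 ≤ 𝓧)
    (hκ : ∀ A, MeasurableSet A → Measurable[𝓑] fun x => κ x A)
    (hproper : ∀ B, MeasurableSet[𝓑] B → ∀ x, κ x B = B.indicator (fun _ => 1) x)
    (hν : κ.comp ν = ν) {h u : X → ℝ≥0∞} (hh : Measurable h) (hu : Measurable[𝓑] u) (x : X) :
    ∫⁻ y, h y * u y ∂ν x = ∫⁻ y, (∫⁻ z, h z ∂κ y) * u y ∂ν x := by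
  have hu' : Measurable u := hu.mono h𝓑𝓧 le_rfl
  calc ∫⁻ y, h y * u y ∂ν x = ∫⁻ y, u y * h y ∂(κ ∘ₖ ν) x := by
        rw [hν]
        exact lintegral_congr fun y => mul_comm _ _
    _ = ∫⁻ y, ∫⁻ z, u z * h z ∂κ y ∂ν x := lintegral_comp _ _ _ (hu'.mul hh)
    _ = ∫⁻ y, (∫⁻ z, h z ∂κ y) * u y ∂ν x := lintegral_congr fun y => by
        rw [mul_comm]
        exact (isProper_coarsenSource h𝓑𝓧 hκ hproper).lintegral_mul h𝓑𝓧 hh hu y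

lemma lintegral_mul_lintegral_comm (h𝓑𝓧 : 𝓑 ≤ 𝓧)
    (hκ : ∀ A, MeasurableSet A → Measurable[𝓑] fun x => κ x A)
    (hproper : ∀ B, MeasurableSet[𝓑] B → ∀ x, κ x B = B.indicator (fun _ => 1) x)
    (hν : κ.comp ν = ν) {h k : X → ℝ≥0∞} (hh : Measurable h) (hk : Measurable k) (x : X) :
    ∫⁻ y, h y * ∫⁻ z, k z ∂κ y ∂ν x = ∫⁻ y, k y * ∫⁻ z, h z ∂κ y ∂ν x := by
  have hκh : Measurable[𝓑] fun y => ∫⁻ z, h z ∂κ y :=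
    hh.lintegral_kernel (κ := κ.coarsenSource hκ)
  have hκk : Measurable[𝓑] fun y => ∫⁻ z, k z ∂κ y :=
    hk.lintegral_kernel (κ := κ.coarsenSource hκ)
  rw [lintegral_mul_eq_lintegral_lintegral_mul h𝓑𝓧 hκ hproper hν hh hκk,
    lintegral_mul_eq_lintegral_lintegral_mul h𝓑𝓧 hκ hproper hν hk hκh]
  simp_rw [mul_comm]

end ProbabilityTheory.Kernel

namespace GibbsSingleton

variable {ι E : Type*} [MeasurableSpace E]

lemma cylSigma_le (U : Set ι) : cylSigma E U ≤ (inferInstance : MeasurableSpace (Config ι E)) :=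
  Measurable.comap_le (measurable_pi_lambda _ fun _ => measurable_pi_apply _)

lemma IsSpecification.lintegral_mul_lintegral_comm
    {γ : Finset ι → Kernel (Config ι E) (Config ι E)} (hγ : IsSpecification γ)
    {V Δ : Finset ι} (hVΔ : V ⊆ Δ) {h k : Config ι E → ℝ≥0∞}
    (hh : Measurable h) (hk : Measurable k) (ω : Config ι E) :
    ∫⁻ η, h η * (∫⁻ ζ, k ζ ∂γ V η) ∂γ Δ ω = ∫⁻ η, k η * (∫⁻ ζ, h ζ ∂γ V η) ∂γ Δ ω :=
  Kernel.lintegral_mul_lintegral_comm (cylSigma_le _) (hγ.2.1 V) (hγ.2.2.1 V)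
    (hγ.2.2.2 V Δ hVΔ) hh hk ω

end GibbsSingleton

theorem specification_exchange_lemma_general
    {d : ℕ} {E : Type*} [MeasurableSpace E]
    (γ : Finset (Fin d → ℤ) → Kernel (Config (Fin d → ℤ) E) (Config (Fin d → ℤ) E))
    (hspec : IsSpecification γ)
    (Λ Γ : Finset (Fin d → ℤ))
    (f g : Config (Fin d → ℤ) E → ℝ≥0∞)
    (hf : Measurable f) (hg : Measurable g) :
    ∀ ω : Config (Fin d → ℤ) E,
      ∫⁻ η, f η * (∫⁻ ζ, (∫⁻ ξ, g ξ ∂(γ Γ ζ)) ∂(γ Λ η)) ∂(γ (Λ ∪ Γ) ω)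
        = ∫⁻ η, g η * (∫⁻ ζ, (∫⁻ ξ, f ξ ∂(γ Λ ζ)) ∂(γ Γ η)) ∂(γ (Λ ∪ Γ) ω) := by
  intro ω
  have hF : Measurable fun η => ∫⁻ ξ, f ξ ∂γ Λ η := hf.lintegral_kernel
  have hG : Measurable fun η => ∫⁻ ξ, g ξ ∂γ Γ η := hg.lintegral_kernel
  calc _ = ∫⁻ η, (∫⁻ ξ, g ξ ∂γ Γ η) * (∫⁻ ξ, f ξ ∂γ Λ η) ∂γ (Λ ∪ Γ) ω :=
        hspec.lintegral_mul_lintegral_comm Finset.subset_union_left hf hG ω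
    _ = ∫⁻ η, (∫⁻ ξ, f ξ ∂γ Λ η) * (∫⁻ ξ, g ξ ∂γ Γ η) ∂γ (Λ ∪ Γ) ω := by
        simp_rw [mul_comm]
    _ = _ := hspec.lintegral_mul_lintegral_comm Finset.subset_union_right hF hg ω

/-- **Lemma 2.**  For a specification `{γ_Λ}`, disjoint finite `Λ, Γ` and bounded
measurable `f, g`:  `γ_{Λ∪Γ}[f γ_Λ(γ_Γ(g))] = γ_{Λ∪Γ}[g γ_Γ(γ_Λ(f))]`. -/
theorem specification_exchange_lemma
    {d : ℕ} (hd : 0 < d) {E : Type*} [MeasurableSpace E]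
    (γ : Finset (Fin d → ℤ) → Kernel (Config (Fin d → ℤ) E) (Config (Fin d → ℤ) E))
    (hspec : IsSpecification γ)
    (Λ Γ : Finset (Fin d → ℤ)) (hdisj : Disjoint Λ Γ)
    (f g : Config (Fin d → ℤ) E → ℝ≥0∞)
    (hf : Measurable f) (hg : Measurable g)
    (hfb : ∃ C : ℝ≥0, ∀ ω, f ω ≤ C) (hgb : ∃ C : ℝ≥0, ∀ ω, g ω ≤ C) :
    ∀ ω : Config (Fin d → ℤ) E,
      ∫⁻ η, f η * (∫⁻ ζ, (∫⁻ ξ, g ξ ∂(γ Γ ζ)) ∂(γ Λ η)) ∂(γ (Λ ∪ Γ) ω)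
        = ∫⁻ η, g η * (∫⁻ ζ, (∫⁻ ξ, f ξ ∂(γ Λ ζ)) ∂(γ Γ η)) ∂(γ (Λ ∪ Γ) ω) :=
  specification_exchange_lemma_general γ hspec Λ Γ f g hf hg
end

section
/- Let {ρ_i}_{i∈ℤ^d} satisfy hypothesis (H1), assume λ^i(E) = 1 for every i, and let μ be a probability measure on (Ω,𝓕) such that (μ λ_j)(B(j,V)^c) = 0 for every finite V ⊆ ℤ^d and j ∉ V. Then for every finite V ⊆ ℤ^d and every k ∈ V, (μ λ_V)(B(k,V∖{k})^c) = 0. -/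
open MeasureTheory ProbabilityTheory
open scoped ENNReal NNReal

open GibbsSingleton MeasureTheory ProbabilityTheory

/-
The event `B(k, W)ᶜ` only looks at the coordinates outside `W` (those of `W` are
overwritten in the definition of `b(k, W, ω)`). Resampling the coordinates of `W` under a
probability measure therefore cannot increase its free probability, so
`λ_V(B(k, V∖{k})ᶜ ∣ ω) ≤ λ_k(B(k, V∖{k})ᶜ ∣ ω)`, and the right-hand side is `μ`-null by
assumption.
-/

namespace GibbsSingleton

variable {ι E : Type*} [DecidableEq ι] [MeasurableSpace E]

theorem dependsOn_bSet (lam : ι → Measure E) (ρ : ι → Config ι E → ℝ≥0) (j : ι)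
    (W : Finset ι) : DependsOn (bSet lam ρ j W) (↑(insert j W))ᶜ := by
  intro η η' h
  have hsubst : ∀ (x : E) (σ : {y // y ∈ W} → E),
      subst W σ (Function.update η j x) = subst W σ (Function.update η' j x) := by
    intro x σ
    funext i
    by_cases hiW : i ∈ W
    · simp [subst, hiW]
    · by_cases hij : i = j
      · simp [subst, hij]
      · simp [subst, hiW, hij, h i (by simp [hij, hiW])]
  simp only [bSet, hsubst]

theorem dependsOn_indicator_BSet_compl (lam : ι → Measure E) (ρ : ι → Config ι E → ℝ≥0)
    {j : ι} {W : Finset ι} (hj : j ∉ W) :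
    DependsOn ((BSet lam ρ j W)ᶜ.indicator fun _ => (1 : ℝ≥0∞)) (↑W)ᶜ := by
  intro η η' h
  have hj' : η j = η' j := h j (by simpa using hj)
  have hb : bSet lam ρ j W η = bSet lam ρ j W η' :=
    dependsOn_bSet lam ρ j W fun i hi => h i fun hiW => hi (by simp [hiW])
  have hmem : η ∈ BSet lam ρ j W ↔ η' ∈ BSet lam ρ j W := by
    rw [BSet, Set.mem_ofPred_eq, Set.mem_ofPred_eq, hj', hb]
  classical
  simp only [Set.indicator_apply, Set.mem_compl_iff, hmem]

theorem freeF_union_le (lam : ι → Measure E) [∀ i, IsProbabilityMeasure (lam i)]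
    {Λ W : Finset ι} (hΛW : Disjoint Λ W) {f : Config ι E → ℝ≥0∞}
    (hf : DependsOn f (↑W)ᶜ) (ω : Config ι E) :
    freeF lam (Λ ∪ W) f ω ≤ freeF lam Λ f ω := by
  have hsplit : ∀ p : ({x // x ∈ Λ} → E) × ({x // x ∈ W} → E),
      f (subst (Λ ∪ W) (MeasurableEquiv.piFinsetUnion (fun _ => E) hΛW p) ω)
        = f (subst Λ p.1 ω) := by
    intro p
    have hrepl : subst (Λ ∪ W) (MeasurableEquiv.piFinsetUnion (fun _ => E) hΛW p) ω
        = Function.updateFinset (subst Λ p.1 ω) W p.2 :=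
      (Function.updateFinset_updateFinset hΛW).symm
    rw [hrepl]
    exact hf fun i hi => by simp [Function.updateFinset, show i ∉ W from hi]
  calc freeF lam (Λ ∪ W) f ω
      = ∫⁻ p, f (subst (Λ ∪ W) (MeasurableEquiv.piFinsetUnion (fun _ => E) hΛW p) ω)
          ∂((Measure.pi fun i : {x // x ∈ Λ} => lam i.1).prod
            (Measure.pi fun i : {x // x ∈ W} => lam i.1)) :=
        (measurePreserving_piFinsetUnion hΛW lam).lintegral_map_equiv _ _
    _ ≤ ∫⁻ σ, ∫⁻ _, f (subst Λ σ ω) ∂(Measure.pi fun i : {x // x ∈ W} => lam i.1)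
          ∂(Measure.pi fun i : {x // x ∈ Λ} => lam i.1) := by
        simp_rw [hsplit]
        exact lintegral_prod_le _
    _ = freeF lam Λ f ω := by simp [freeF]

end GibbsSingleton

theorem muFree_null_of_class_N_general
    {d : ℕ} {E : Type*} [MeasurableSpace E]
    (lam : (Fin d → ℤ) → Measure E) [∀ i, IsProbabilityMeasure (lam i)]
    (ρ : (Fin d → ℤ) → Config (Fin d → ℤ) E → ℝ≥0)
    (μ : Measure (Config (Fin d → ℤ) E))
    (hN : ∀ (V : Finset (Fin d → ℤ)) (j : Fin d → ℤ), j ∉ V →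
      ∫⁻ ω, freeF lam {j} ((BSet lam ρ j V)ᶜ.indicator fun _ => 1) ω ∂μ = 0) :
    ∀ (V : Finset (Fin d → ℤ)) (k : Fin d → ℤ), k ∈ V →
      ∫⁻ ω, freeF lam V ((BSet lam ρ k (V.erase k))ᶜ.indicator fun _ => 1) ω ∂μ = 0 := by
  intro V k hk
  have hkW : k ∉ V.erase k := Finset.notMem_erase k V
  have hV : {k} ∪ V.erase k = V := by rw [← Finset.insert_eq, Finset.insert_erase hk]
  refine le_antisymm ?_ zero_le
  calc ∫⁻ ω, freeF lam V ((BSet lam ρ k (V.erase k))ᶜ.indicator fun _ => 1) ω ∂μ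
      ≤ ∫⁻ ω, freeF lam {k} ((BSet lam ρ k (V.erase k))ᶜ.indicator fun _ => 1) ω ∂μ := by
        refine lintegral_mono fun ω => ?_
        have h := freeF_union_le lam (Finset.disjoint_singleton_left.mpr hkW)
          (dependsOn_indicator_BSet_compl lam ρ hkW) ω
        rwa [hV] at h
    _ = 0 := hN _ k hkW

/-- **Lemma 3 (3)(a).**  If `μ ∈ 𝒩`, i.e. `(μ λ_j)(B(j,V)ᶜ) = 0` for all finite `V`
and `j ∉ V`, then `(μ λ_V)(B(k,V∖{k})ᶜ) = 0` for every finite `V` and `k ∈ V`. -/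
theorem muFree_null_of_class_N
    {d : ℕ} (hd : 0 < d) {E : Type*} [MeasurableSpace E]
    (lam : (Fin d → ℤ) → Measure E) [∀ i, IsProbabilityMeasure (lam i)]
    (ρ : (Fin d → ℤ) → Config (Fin d → ℤ) E → ℝ≥0)
    (hmeas : ∀ i, Measurable (ρ i))
    (h1 : H1 lam ρ)
    (μ : Measure (Config (Fin d → ℤ) E)) [IsProbabilityMeasure μ]
    (hN : ∀ (V : Finset (Fin d → ℤ)) (j : Fin d → ℤ), j ∉ V →
      ∫⁻ ω, freeF lam {j} ((BSet lam ρ j V)ᶜ.indicator fun _ => 1) ω ∂μ = 0) :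
    ∀ (V : Finset (Fin d → ℤ)) (k : Fin d → ℤ), k ∈ V →
      ∫⁻ ω, freeF lam V ((BSet lam ρ k (V.erase k))ᶜ.indicator fun _ => 1) ω ∂μ = 0 :=
  muFree_null_of_class_N_general lam ρ μ hN
end

section
/- Let E = [0,1] with its Borel σ-algebra, d = 1, and let each λ^i be Lebesgue measure on [0,1]. Define ρ_i(ω) = 2·1_{[0,1/2]}(ω_i) if |{j : ω_j > 1/2}| = ∞, and ρ_i(ω) = 2·1_{(1/2,1]}(ω_i) otherwise. Then each ρ_i is measurable, λ_i(ρ_i ∣ ω) = 1 for all ω, and the family {ρ_i} satisfies hypotheses (H1) and (H2); moreover, for ω with |{j : ω_j > 1/2}| = ∞ one has b(j,V,ω) = [0,1/2] for every j and every finite V ⊆ ℤ∖{j}, and R_i^j(ω) = 1/2 if ω_j ∈ [0,1/2] and R_i^j(ω) = ∞ otherwise. -/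
open MeasureTheory ProbabilityTheory
open scoped ENNReal NNReal

open GibbsSingleton MeasureTheory ProbabilityTheory
open scoped Classical

namespace GibbsSingleton

/-- The a priori measures of the example: Lebesgue measure on `[0,1]` at every site. -/
noncomputable def exLam : ℤ → Measure (Set.Icc (0:ℝ) 1) := fun _ => volume

/-- The singleton densities of Example 1:
`ρ_i(ω) = 2·1_{[0,1/2]}(ω_i)` if infinitely many `ω_j > 1/2`, and
`ρ_i(ω) = 2·1_{(1/2,1]}(ω_i)` otherwise. -/
noncomputable def exRho (i : ℤ) (ω : Config ℤ (Set.Icc (0:ℝ) 1)) : ℝ≥0 :=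
  if {j : ℤ | 1 / 2 < (ω j : ℝ)}.Infinite then
    (if (ω i : ℝ) ≤ 1 / 2 then 2 else 0)
  else
    (if 1 / 2 < (ω i : ℝ) then 2 else 0)

end GibbsSingleton

namespace GibbsSingletonProof

open GibbsSingleton MeasureTheory Set
open scoped ENNReal NNReal Classical

abbrev E01 : Type := Set.Icc (0:ℝ) 1

instance : Nonempty E01 := ⟨⟨0, by norm_num⟩⟩

variable {ι E : Type*} [DecidableEq ι] [MeasurableSpace E]

lemma subst_notMem {V : Finset ι} {σ : {y // y ∈ V} → E} {ω : Config ι E} {k : ι} (hk : k ∉ V) :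
    subst V σ ω k = ω k := dif_neg hk

lemma subst_singleton (i : ι) (σ : {y // y ∈ ({i} : Finset ι)} → E) (ω : Config ι E) :
    subst {i} σ ω = Function.update ω i (σ ⟨i, Finset.mem_singleton_self i⟩) := by
  funext k
  by_cases hk : k = i
  · subst hk
    simp [subst, Function.update_self]
  · rw [Function.update_of_ne hk, subst_notMem (by simp [hk])]

lemma freeF_singleton (lam : ι → Measure E) (i : ι) (h : Config ι E → ℝ≥0∞) (ω : Config ι E) :
    freeF lam {i} h ω = ∫⁻ x, h (Function.update ω i x) ∂(lam i) := by
  haveI : Unique {x // x ∈ ({i} : Finset ι)} :=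
    ⟨⟨⟨i, Finset.mem_singleton_self i⟩⟩, fun a => Subtype.ext (Finset.mem_singleton.mp a.2)⟩
  have hmeas : (fun k : {x // x ∈ ({i} : Finset ι)} => lam k.1) = fun _ => lam i := by
    funext k
    rw [Finset.mem_singleton.mp k.2]
  rw [freeF, hmeas]
  have := (measurePreserving_funUnique (lam i) {x // x ∈ ({i} : Finset ι)}).lintegral_comp_emb
    (MeasurableEquiv.funUnique _ _).measurableEmbedding (fun x => h (Function.update ω i x))
  have heq : ∀ σ : {x // x ∈ ({i} : Finset ι)} → E,
      h (subst {i} σ ω) = h (Function.update ω i ((MeasurableEquiv.funUnique _ E) σ)) :=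
    fun σ => by
      rw [subst_singleton]
      exact congrArg (fun z => h (Function.update ω i (σ z))) (Subsingleton.elim _ _)
  refine (lintegral_congr heq).trans ?_
  convert this using 2
  congr!

/-- The condition distinguishing the two regimes of the example. -/
def Inf01 (ω : Config ℤ E01) : Prop := {j : ℤ | 1/2 < (ω j : ℝ)}.Infinite

lemma inf01_congr {ω η : Config ℤ E01} (S : Set ℤ) (hS : S.Finite)
    (h : ∀ k, k ∉ S → ω k = η k) : Inf01 ω ↔ Inf01 η := by
  have key : ∀ (a b : Config ℤ E01), (∀ k, k ∉ S → a k = b k) → Inf01 a → Inf01 b := by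
    intro a b hab ha
    refine (ha.diff hS).mono ?_
    rintro k ⟨hk, hkS⟩
    simpa only [Set.mem_setOf_eq, ← hab k hkS] using hk
  exact ⟨key ω η h, key η ω fun k hk => (h k hk).symm⟩

lemma inf01_update (ω : Config ℤ E01) (i : ℤ) (x : E01) :
    Inf01 (Function.update ω i x) ↔ Inf01 ω :=
  inf01_congr {i} (finite_singleton i)
    (fun k hk => Function.update_of_ne (by simpa using hk) _ _)

lemma inf01_subst (V : Finset ℤ) (σ : {y // y ∈ V} → E01) (ω : Config ℤ E01) :
    Inf01 (subst V σ ω) ↔ Inf01 ω :=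
  inf01_congr (V : Set ℤ) V.finite_toSet (fun k hk => subst_notMem (by simpa using hk))

lemma exRho_of_inf {ω : Config ℤ E01} (h : Inf01 ω) (i : ℤ) :
    exRho i ω = if (ω i : ℝ) ≤ 1/2 then 2 else 0 := if_pos h

lemma exRho_of_fin {ω : Config ℤ E01} (h : ¬ Inf01 ω) (i : ℤ) :
    exRho i ω = if 1/2 < (ω i : ℝ) then 2 else 0 := if_neg h

lemma measSet_le : MeasurableSet {x : E01 | (x : ℝ) ≤ 1/2} :=
  measurable_subtype_coe measurableSet_Iic

lemma measSet_gt : MeasurableSet {x : E01 | 1/2 < (x : ℝ)} :=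
  measurable_subtype_coe measurableSet_Ioi

lemma volE_le : (volume : Measure E01) {x : E01 | (x : ℝ) ≤ 1/2} = 1/2 := by
  have hemb : MeasurableEmbedding ((↑) : E01 → ℝ) :=
    MeasurableEmbedding.subtype_coe measurableSet_Icc
  have hdef : (volume : Measure E01) = Measure.comap Subtype.val volume := rfl
  rw [hdef, hemb.comap_apply]
  have himg : (Subtype.val '' {x : E01 | (x : ℝ) ≤ 1/2}) = Set.Icc (0:ℝ) (1/2) := by
    ext y
    constructor
    · rintro ⟨⟨z, hz⟩, hz2, rfl⟩
      exact ⟨hz.1, hz2⟩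
    · rintro ⟨h0, h2⟩
      exact ⟨⟨y, h0, by linarith⟩, h2, rfl⟩
  rw [himg, Real.volume_Icc, show (1:ℝ)/2 - 0 = (2:ℝ)⁻¹ by norm_num,
    ENNReal.ofReal_inv_of_pos (by norm_num)]
  norm_num

lemma volE_gt : (volume : Measure E01) {x : E01 | 1/2 < (x : ℝ)} = 1/2 := by
  have hemb : MeasurableEmbedding ((↑) : E01 → ℝ) :=
    MeasurableEmbedding.subtype_coe measurableSet_Icc
  have hdef : (volume : Measure E01) = Measure.comap Subtype.val volume := rfl
  rw [hdef, hemb.comap_apply]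
  have himg : (Subtype.val '' {x : E01 | 1/2 < (x : ℝ)}) = Set.Ioc (1/2 : ℝ) 1 := by
    ext y
    constructor
    · rintro ⟨⟨z, hz⟩, hz2, rfl⟩
      exact ⟨hz2, hz.2⟩
    · rintro ⟨h0, h2⟩
      exact ⟨⟨y, by linarith, h2⟩, h0, rfl⟩
  rw [himg, Real.volume_Ioc, show (1:ℝ) - 1/2 = (2:ℝ)⁻¹ by norm_num,
    ENNReal.ofReal_inv_of_pos (by norm_num)]
  norm_num

lemma lint_ite_le (c : ℝ≥0∞) :
    ∫⁻ x : E01, (if (x : ℝ) ≤ 1/2 then c else 0) = c * (1/2) := by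
  have hfe : ∀ x : E01, (if (x : ℝ) ≤ 1/2 then c else 0)
      = ({x : E01 | (x : ℝ) ≤ 1/2}).indicator (fun _ => c) x := by
    intro x
    rw [Set.indicator_apply]
    rfl
  rw [lintegral_congr hfe, lintegral_indicator_const measSet_le, volE_le]

lemma lint_ite_gt (c : ℝ≥0∞) :
    ∫⁻ x : E01, (if 1/2 < (x : ℝ) then c else 0) = c * (1/2) := by
  have hfe : ∀ x : E01, (if 1/2 < (x : ℝ) then c else 0)
      = ({x : E01 | 1/2 < (x : ℝ)}).indicator (fun _ => c) x := by
    intro x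
    rw [Set.indicator_apply]
    rfl
  rw [lintegral_congr hfe, lintegral_indicator_const measSet_gt, volE_gt]

lemma freeF_rat_inf {i j : ℤ} (hij : i ≠ j) {η : Config ℤ E01} (hη : Inf01 η)
    (hj : (η j : ℝ) ≤ 1/2) :
    freeF exLam {i} (rat exRho i j) η = 1/2 := by
  rw [freeF_singleton, show exLam i = volume from rfl]
  have hfe : ∀ x : E01, rat exRho i j (Function.update η i x)
      = if (x : ℝ) ≤ 1/2 then 1 else 0 := by
    intro x
    have hinf : Inf01 (Function.update η i x) := (inf01_update η i x).mpr hη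
    rw [rat, exRho_of_inf hinf, exRho_of_inf hinf, Function.update_self,
      Function.update_of_ne hij.symm, if_pos hj]
    split_ifs with hx
    · rw [ENNReal.div_self (by norm_num) (by norm_num)]
    · simp
  rw [lintegral_congr hfe, lint_ite_le]
  norm_num

lemma freeF_rat_fin {i j : ℤ} (hij : i ≠ j) {η : Config ℤ E01} (hη : ¬ Inf01 η)
    (hj : 1/2 < (η j : ℝ)) :
    freeF exLam {i} (rat exRho i j) η = 1/2 := by
  rw [freeF_singleton, show exLam i = volume from rfl]
  have hfe : ∀ x : E01, rat exRho i j (Function.update η i x)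
      = if 1/2 < (x : ℝ) then 1 else 0 := by
    intro x
    have hfin : ¬ Inf01 (Function.update η i x) := fun hc => hη ((inf01_update η i x).mp hc)
    rw [rat, exRho_of_fin hfin, exRho_of_fin hfin, Function.update_self,
      Function.update_of_ne hij.symm, if_pos hj]
    split_ifs with hx
    · rw [ENNReal.div_self (by norm_num) (by norm_num)]
    · simp
  rw [lintegral_congr hfe, lint_ite_gt]
  norm_num

lemma coord_subst_update {V : Finset ℤ} {σ : {y // y ∈ V} → E01} {ω : Config ℤ E01}
    {j : ℤ} (hj : j ∉ V) (x : E01) :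
    (subst V σ (Function.update ω j x)) j = x := by
  rw [subst_notMem hj, Function.update_self]

lemma inf01_subst_update {V : Finset ℤ} (σ : {y // y ∈ V} → E01) (ω : Config ℤ E01)
    (j : ℤ) (x : E01) (hω : Inf01 ω) :
    Inf01 (subst V σ (Function.update ω j x)) :=
  (inf01_subst _ _ _).mpr ((inf01_update _ _ _).mpr hω)

lemma not_inf01_subst_update {V : Finset ℤ} (σ : {y // y ∈ V} → E01) (ω : Config ℤ E01)
    (j : ℤ) (x : E01) (hω : ¬ Inf01 ω) :
    ¬ Inf01 (subst V σ (Function.update ω j x)) :=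
  fun hc => hω ((inf01_update _ _ _).mp ((inf01_subst _ _ _).mp hc))

lemma half_pos' : (0 : ℝ≥0∞) < 1/2 := by norm_num

lemma half_lt_top : (1/2 : ℝ≥0∞) < ⊤ := by norm_num

lemma bSet_inf_mem {ω : Config ℤ E01} (hω : Inf01 ω) (j : ℤ) (V : Finset ℤ) (hj : j ∉ V)
    {x : E01} (hx : (x : ℝ) ≤ 1/2) : x ∈ bSet exLam exRho j V ω := by
  haveI : Nonempty ({y // y ∈ V} → E01) := ⟨fun _ => ⟨0, by norm_num⟩⟩
  refine ⟨fun σ => ?_, fun i hi => ?_⟩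
  · rw [exRho_of_inf (inf01_subst_update σ ω j x hω), coord_subst_update hj, if_pos hx]
    norm_num
  · have key : ∀ σ : {y // y ∈ V} → E01,
        freeF exLam {i} (rat exRho i j) (subst V σ (Function.update ω j x)) = 1/2 := by
      intro σ
      exact freeF_rat_inf hi (inf01_subst_update σ ω j x hω)
        (by rw [coord_subst_update hj]; exact hx)
    constructor
    · rw [iInf_congr key, iInf_const]
      exact half_pos'
    · rw [iSup_congr key, iSup_const]
      exact half_lt_top

lemma bSet_fin_mem {ω : Config ℤ E01} (hω : ¬ Inf01 ω) (j : ℤ) (V : Finset ℤ) (hj : j ∉ V)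
    {x : E01} (hx : 1/2 < (x : ℝ)) : x ∈ bSet exLam exRho j V ω := by
  haveI : Nonempty ({y // y ∈ V} → E01) := ⟨fun _ => ⟨0, by norm_num⟩⟩
  refine ⟨fun σ => ?_, fun i hi => ?_⟩
  · rw [exRho_of_fin (not_inf01_subst_update σ ω j x hω), coord_subst_update hj, if_pos hx]
    norm_num
  · have key : ∀ σ : {y // y ∈ V} → E01,
        freeF exLam {i} (rat exRho i j) (subst V σ (Function.update ω j x)) = 1/2 := by
      intro σ
      exact freeF_rat_fin hi (not_inf01_subst_update σ ω j x hω)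
        (by rw [coord_subst_update hj]; exact hx)
    constructor
    · rw [iInf_congr key, iInf_const]
      exact half_pos'
    · rw [iSup_congr key, iSup_const]
      exact half_lt_top

lemma bSet_inf {ω : Config ℤ E01} (hω : Inf01 ω) (j : ℤ) (V : Finset ℤ) (hj : j ∉ V) :
    bSet exLam exRho j V ω = {x : E01 | (x : ℝ) ≤ 1/2} := by
  ext x
  constructor
  · rintro ⟨h1, -⟩
    by_contra hx
    rw [Set.mem_setOf_eq] at hx
    have h0 := h1 (fun _ => ⟨0, by norm_num⟩)
    rw [exRho_of_inf (inf01_subst_update _ ω j x hω), coord_subst_update hj, if_neg hx] at h0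
    exact lt_irrefl 0 h0
  · exact fun hx => bSet_inf_mem hω j V hj hx

lemma mem_bSet_le {ω : Config ℤ E01} (hω : Inf01 ω) {i j : ℤ} (hij : i ≠ j) {xi : E01}
    (h : xi ∈ bSet exLam exRho i {j} ω) : (xi : ℝ) ≤ 1/2 := by
  by_contra hx
  have h0 := h.1 (fun _ => ⟨0, by norm_num⟩)
  rw [exRho_of_inf (inf01_subst_update _ ω i xi hω),
    coord_subst_update (by simpa using hij) xi, if_neg hx] at h0
  exact lt_irrefl 0 h0

lemma mem_bSet_gt {ω : Config ℤ E01} (hω : ¬ Inf01 ω) {i j : ℤ} (hij : i ≠ j) {xi : E01}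
    (h : xi ∈ bSet exLam exRho i {j} ω) : 1/2 < (xi : ℝ) := by
  by_contra hx
  have h0 := h.1 (fun _ => ⟨0, by norm_num⟩)
  rw [exRho_of_fin (not_inf01_subst_update _ ω i xi hω),
    coord_subst_update (by simpa using hij) xi, if_neg hx] at h0
  exact lt_irrefl 0 h0

lemma meas_inf01 : MeasurableSet {ω : Config ℤ E01 | Inf01 ω} := by
  have hset : {ω : Config ℤ E01 | ¬ Inf01 ω}
      = ⋃ (F : Finset ℤ), ⋂ (k : ℤ), ⋂ (_ : k ∉ F), {ω : Config ℤ E01 | (ω k : ℝ) ≤ 1/2} := by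
    ext ω
    simp only [Set.mem_setOf_eq, Set.mem_iUnion, Set.mem_iInter]
    constructor
    · intro h
      rw [Inf01, Set.not_infinite] at h
      refine ⟨h.toFinset, fun k hk => ?_⟩
      by_contra hle
      exact hk (h.mem_toFinset.mpr (by simpa using hle))
    · rintro ⟨F, hF⟩ hInf
      refine hInf (F.finite_toSet.subset fun k hk => ?_)
      by_contra hkF
      exact absurd (hF k hkF) (not_le.mpr hk)
  have hm : MeasurableSet {ω : Config ℤ E01 | ¬ Inf01 ω} := by
    rw [hset]
    refine MeasurableSet.iUnion fun F => MeasurableSet.iInter fun k =>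
      MeasurableSet.iInter fun _ => ?_
    show MeasurableSet ((fun ω : Config ℤ E01 => ω k) ⁻¹' {x : E01 | (x : ℝ) ≤ 1/2})
    exact (measurable_pi_apply k) measSet_le
  have hc : {ω : Config ℤ E01 | Inf01 ω} = {ω : Config ℤ E01 | ¬ Inf01 ω}ᶜ := by
    ext ω; simp
  rw [hc]
  exact hm.compl

lemma meas_exRho (i : ℤ) : Measurable (exRho i) := by
  have hf : Measurable fun ω : Config ℤ E01 => (if (ω i : ℝ) ≤ 1/2 then (2:ℝ≥0) else 0) := by
    have hE : Measurable fun x : E01 => (if (x : ℝ) ≤ 1/2 then (2:ℝ≥0) else 0) :=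
      Measurable.ite measSet_le measurable_const measurable_const
    exact hE.comp (measurable_pi_apply i)
  have hg : Measurable fun ω : Config ℤ E01 => (if 1/2 < (ω i : ℝ) then (2:ℝ≥0) else 0) := by
    have hE : Measurable fun x : E01 => (if 1/2 < (x : ℝ) then (2:ℝ≥0) else 0) :=
      Measurable.ite measSet_gt measurable_const measurable_const
    exact hE.comp (measurable_pi_apply i)
  exact Measurable.ite meas_inf01 hf hg

lemma norm_one (i : ℤ) (ω : Config ℤ E01) :
    freeF exLam {i} (fun η => ((exRho i η : ℝ≥0∞))) ω = 1 := by
  rw [freeF_singleton, show exLam i = volume from rfl]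
  by_cases hω : Inf01 ω
  · have hfe : ∀ x : E01, ((exRho i (Function.update ω i x) : ℝ≥0∞))
        = if (x : ℝ) ≤ 1/2 then 2 else 0 := by
      intro x
      rw [exRho_of_inf ((inf01_update ω i x).mpr hω), Function.update_self]
      split_ifs <;> simp
    rw [lintegral_congr hfe, lint_ite_le]
    norm_num
    rw [ENNReal.mul_inv_cancel (by norm_num) (by norm_num)]
  · have hfe : ∀ x : E01, ((exRho i (Function.update ω i x) : ℝ≥0∞))
        = if 1/2 < (x : ℝ) then 2 else 0 := by
      intro x
      rw [exRho_of_fin (fun hc => hω ((inf01_update ω i x).mp hc)), Function.update_self]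
      split_ifs <;> simp
    rw [lintegral_congr hfe, lint_ite_gt]
    norm_num
    rw [ENNReal.mul_inv_cancel (by norm_num) (by norm_num)]

end GibbsSingletonProof

open GibbsSingletonProof in
/-- **Example 1.**  The densities `exRho` are measurable, normalized, and satisfy
(H1) and (H2); moreover for configurations `ω` with infinitely many coordinates
`> 1/2`, `b(j,V,ω) = [0,1/2]` and `R_i^j(ω) = 1/2` if `ω_j ∈ [0,1/2]`, `= ∞`
otherwise. -/
theorem example_singletons_satisfy_hypotheses :
    (∀ i : ℤ, Measurable (exRho i)) ∧
    (∀ (i : ℤ) (ω : Config ℤ (Set.Icc (0:ℝ) 1)),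
      freeF exLam {i} (fun η => (exRho i η : ℝ≥0∞)) ω = 1) ∧
    H1 exLam exRho ∧ H2 exLam exRho ∧
    (∀ ω : Config ℤ (Set.Icc (0:ℝ) 1), {j : ℤ | 1 / 2 < (ω j : ℝ)}.Infinite →
      ∀ (j : ℤ) (V : Finset ℤ), j ∉ V →
        bSet exLam exRho j V ω = {x : Set.Icc (0:ℝ) 1 | (x : ℝ) ≤ 1 / 2}) ∧
    (∀ ω : Config ℤ (Set.Icc (0:ℝ) 1), {j : ℤ | 1 / 2 < (ω j : ℝ)}.Infinite →
      ∀ i j : ℤ, i ≠ j → ∀ xi ∈ bSet exLam exRho i {j} ω,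
        ((exRho i (Function.update ω i xi) : ℝ≥0∞) /
            (exRho j (Function.update ω i xi) : ℝ≥0∞)) *
          freeF exLam {j} (rat exRho j i) (Function.update ω i xi)
        = if (ω j : ℝ) ≤ 1 / 2 then 1 / 2 else ⊤) := by
  refine ⟨meas_exRho, norm_one, ?_, ?_, ?_, ?_⟩
  · -- H1
    intro ω j V hjV
    by_cases hω : Inf01 ω
    · exact ⟨⟨0, by norm_num⟩, bSet_inf_mem hω j V hjV (by norm_num)⟩
    · exact ⟨⟨1, by norm_num⟩, bSet_fin_mem hω j V hjV (by norm_num)⟩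
  · -- H2
    intro i j hij ω xi hxi xj hxj
    by_cases hω : Inf01 ω
    · have hxi' : (xi : ℝ) ≤ 1/2 := mem_bSet_le hω hij hxi
      have hxj' : (xj : ℝ) ≤ 1/2 := mem_bSet_le hω hij.symm hxj
      have hui : Inf01 (Function.update ω i xi) := (inf01_update ω i xi).mpr hω
      have huj : Inf01 (Function.update ω j xj) := (inf01_update ω j xj).mpr hω
      have e1 : exRho i ω = if (ω i : ℝ) ≤ 1/2 then 2 else 0 := exRho_of_inf hω i
      have e2 : exRho j ω = if (ω j : ℝ) ≤ 1/2 then 2 else 0 := exRho_of_inf hω j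
      have e3 : exRho j (Function.update ω i xi) = if (ω j : ℝ) ≤ 1/2 then 2 else 0 := by
        rw [exRho_of_inf hui, Function.update_of_ne hij.symm]
      have e4 : exRho i (Function.update ω j xj) = if (ω i : ℝ) ≤ 1/2 then 2 else 0 := by
        rw [exRho_of_inf huj, Function.update_of_ne hij]
      have e5 : exRho i (Function.update ω i xi) = 2 := by
        rw [exRho_of_inf hui, Function.update_self, if_pos hxi']
      have e6 : exRho j (Function.update ω j xj) = 2 := by
        rw [exRho_of_inf huj, Function.update_self, if_pos hxj']
      have e7 : freeF exLam {j} (rat exRho j i) (Function.update ω i xi) = 1/2 :=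
        freeF_rat_inf hij.symm hui (by rw [Function.update_self]; exact hxi')
      have e8 : freeF exLam {i} (rat exRho i j) (Function.update ω j xj) = 1/2 :=
        freeF_rat_inf hij huj (by rw [Function.update_self]; exact hxj')
      rw [e1, e2, e3, e4, e5, e6, e7, e8, mul_comm]
    · have hxi' : 1/2 < (xi : ℝ) := mem_bSet_gt hω hij hxi
      have hxj' : 1/2 < (xj : ℝ) := mem_bSet_gt hω hij.symm hxj
      have hui : ¬ Inf01 (Function.update ω i xi) :=
        fun hc => hω ((inf01_update ω i xi).mp hc)
      have huj : ¬ Inf01 (Function.update ω j xj) :=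
        fun hc => hω ((inf01_update ω j xj).mp hc)
      have e1 : exRho i ω = if 1/2 < (ω i : ℝ) then 2 else 0 := exRho_of_fin hω i
      have e2 : exRho j ω = if 1/2 < (ω j : ℝ) then 2 else 0 := exRho_of_fin hω j
      have e3 : exRho j (Function.update ω i xi) = if 1/2 < (ω j : ℝ) then 2 else 0 := by
        rw [exRho_of_fin hui, Function.update_of_ne hij.symm]
      have e4 : exRho i (Function.update ω j xj) = if 1/2 < (ω i : ℝ) then 2 else 0 := by
        rw [exRho_of_fin huj, Function.update_of_ne hij]
      have e5 : exRho i (Function.update ω i xi) = 2 := by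
        rw [exRho_of_fin hui, Function.update_self, if_pos hxi']
      have e6 : exRho j (Function.update ω j xj) = 2 := by
        rw [exRho_of_fin huj, Function.update_self, if_pos hxj']
      have e7 : freeF exLam {j} (rat exRho j i) (Function.update ω i xi) = 1/2 :=
        freeF_rat_fin hij.symm hui (by rw [Function.update_self]; exact hxi')
      have e8 : freeF exLam {i} (rat exRho i j) (Function.update ω j xj) = 1/2 :=
        freeF_rat_fin hij huj (by rw [Function.update_self]; exact hxj')
      rw [e1, e2, e3, e4, e5, e6, e7, e8, mul_comm]
  · -- bSet description
    intro ω hω j V hjV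
    exact bSet_inf hω j V hjV
  · -- R computation
    intro ω hω i j hij xi hxi
    have hω' : Inf01 ω := hω
    have hxi' : (xi : ℝ) ≤ 1/2 := mem_bSet_le hω' hij hxi
    have hui : Inf01 (Function.update ω i xi) := (inf01_update ω i xi).mpr hω'
    have e1 : exRho i (Function.update ω i xi) = 2 := by
      rw [exRho_of_inf hui, Function.update_self, if_pos hxi']
    have e2 : exRho j (Function.update ω i xi) = if (ω j : ℝ) ≤ 1/2 then 2 else 0 := by
      rw [exRho_of_inf hui, Function.update_of_ne hij.symm]
    have e3 : freeF exLam {j} (rat exRho j i) (Function.update ω i xi) = 1/2 :=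
      freeF_rat_inf hij.symm hui (by rw [Function.update_self]; exact hxi')
    rw [e1, e2, e3]
    split_ifs with h
    · rw [ENNReal.div_self (by norm_num) (by norm_num), one_mul]
    · rw [ENNReal.coe_zero, ENNReal.div_zero (by norm_num),
        ENNReal.top_mul (by norm_num)]
end
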